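/- arXiv:1404.2998 — 5 statements merged into one kernel-verified Lean document; each statement's English description precedes it below -/
import Mathlib

section
/- For all real s and t, the matrices g(t)·M(t) form a one-parameter group: g(s+t)·M(s+t) = (g(s)·M(s))·(g(t)·M(t)), where M(t) := [[z(t), w(t)], [w(t), z(−t)]]. -/
noncomputable def gf (E ε η t : ℝ) : ℂ :=
  Complex.exp (Complex.I * t * (E - ε) / 2)

noncomputable def wf (E ε η t : ℝ) : ℂ :=
  (2 * Complex.I * η / Real.sqrt ((E - ε) ^ 2 + 4 * η ^ 2)) *
    Real.sin (t * Real.sqrt ((E - ε) ^ 2 / 4 + η ^ 2))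

noncomputable def zf (E ε η t : ℝ) : ℂ :=
  (Real.cos (t * Real.sqrt ((E - ε) ^ 2 / 4 + η ^ 2)) : ℂ) +
    (Complex.I * (E - ε) / Real.sqrt ((E - ε) ^ 2 + 4 * η ^ 2)) *
      Real.sin (t * Real.sqrt ((E - ε) ^ 2 / 4 + η ^ 2))

noncomputable def Mmat (E ε η t : ℝ) : Matrix (Fin 2) (Fin 2) ℂ :=
  !![zf E ε η t, wf E ε η t; wf E ε η t, zf E ε η (-t)]

theorem stmt2 (E ε η : ℝ) (hη : 0 < η) (s t : ℝ) :
    gf E ε η (s + t) • Mmat E ε η (s + t) =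
      (gf E ε η s • Mmat E ε η s) * (gf E ε η t • Mmat E ε η t) := by
  have hd0 : Real.sqrt ((E - ε) ^ 2 + 4 * η ^ 2) ≠ 0 := by positivity
  have hD0 : ((Real.sqrt ((E - ε) ^ 2 + 4 * η ^ 2) : ℝ) : ℂ) ≠ 0 :=
    Complex.ofReal_ne_zero.mpr hd0
  have hD2 : ((Real.sqrt ((E - ε) ^ 2 + 4 * η ^ 2) : ℝ) : ℂ) ^ 2 =
      ((E : ℂ) - ε) ^ 2 + 4 * (η : ℂ) ^ 2 := by
    have h := Real.sq_sqrt (show (0:ℝ) ≤ (E - ε) ^ 2 + 4 * η ^ 2 by positivity)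
    exact_mod_cast h
  have hg : gf E ε η (s + t) = gf E ε η s * gf E ε η t := by
    unfold gf; rw [← Complex.exp_add]; congr 1; push_cast; ring
  have key : ∀ (a b cs ss ct st : ℂ), a ^ 2 + b ^ 2 = -1 →
      (!![cs + a * ss, b * ss; b * ss, cs - a * ss] : Matrix (Fin 2) (Fin 2) ℂ) *
        !![ct + a * st, b * st; b * st, ct - a * st] =
      !![(cs * ct - ss * st) + a * (ss * ct + cs * st), b * (ss * ct + cs * st);
         b * (ss * ct + cs * st), (cs * ct - ss * st) - a * (ss * ct + cs * st)] := by
    intro a b cs ss ct st hab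
    ext i j
    fin_cases i <;> fin_cases j <;>
      simp [Matrix.mul_apply, Fin.sum_univ_two] <;>
      first
      | linear_combination (ss * st) * hab
      | ring
  have hab : (Complex.I * (E - ε) / Real.sqrt ((E - ε) ^ 2 + 4 * η ^ 2)) ^ 2 +
      (2 * Complex.I * η / Real.sqrt ((E - ε) ^ 2 + 4 * η ^ 2)) ^ 2 = -1 := by
    field_simp
    linear_combination (2 * (((E:ℂ) - ε) ^ 2 + 4 * (η:ℂ) ^ 2) -
      ((Real.sqrt ((E - ε) ^ 2 + 4 * η ^ 2) : ℝ) : ℂ) ^ 2) * Complex.I_sq + (2 + Complex.I ^ 2) * hD2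
  have hz : ∀ u : ℝ, zf E ε η (-u) =
      (Real.cos (u * Real.sqrt ((E - ε) ^ 2 / 4 + η ^ 2)) : ℂ) -
        Complex.I * (E - ε) / Real.sqrt ((E - ε) ^ 2 + 4 * η ^ 2) *
          Real.sin (u * Real.sqrt ((E - ε) ^ 2 / 4 + η ^ 2)) := by
    intro u
    unfold zf
    rw [neg_mul, Real.cos_neg, Real.sin_neg]
    push_cast
    ring
  have hM : Mmat E ε η (s + t) = Mmat E ε η s * Mmat E ε η t := by
    unfold Mmat
    rw [hz, hz, hz]
    unfold zf wf
    rw [show ∀ u : ℝ, 2 * Complex.I * η / Real.sqrt ((E - ε) ^ 2 + 4 * η ^ 2) *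
        Real.sin (u * Real.sqrt ((E - ε) ^ 2 / 4 + η ^ 2)) =
        (2 * Complex.I * η / Real.sqrt ((E - ε) ^ 2 + 4 * η ^ 2)) *
        (Real.sin (u * Real.sqrt ((E - ε) ^ 2 / 4 + η ^ 2)) : ℂ) from fun _ => rfl]
    rw [key _ _ _ _ _ _ hab]
    rw [show (s + t) * Real.sqrt ((E - ε) ^ 2 / 4 + η ^ 2) =
        s * Real.sqrt ((E - ε) ^ 2 / 4 + η ^ 2) + t * Real.sqrt ((E - ε) ^ 2 / 4 + η ^ 2) from
      add_mul _ _ _, Real.cos_add, Real.sin_add]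
    push_cast
    ring_nf
  rw [hg, hM, smul_mul_smul_comm]
end

section
/- For every integer N ≥ 1, every n with 1 ≤ n ≤ N, and every real t, the matrix exponential satisfies exp(i t Y_n) = e^{i t ε}·V_n(t), where Y_n := ε·I + ((E−ε)/2)·J_n + X_n (viewed as a complex (N+1)×(N+1) matrix). -/
noncomputable def Vmat (E ε η : ℝ) (N n : ℕ) (t : ℝ) :
    Matrix (Fin (N + 1)) (Fin (N + 1)) ℂ :=
  fun j k =>
    if j.val = 0 then
      gf E ε η t * zf E ε η t * (if k.val = 0 then 1 else 0) +
        gf E ε η t * wf E ε η t * (if k.val = n then 1 else 0)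
    else if j.val = n then
      gf E ε η t * wf E ε η t * (if k.val = 0 then 1 else 0) +
        gf E ε η t * zf E ε η (-t) * (if k.val = n then 1 else 0)
    else if j = k then 1 else 0

def Jmat (N n : ℕ) : Matrix (Fin (N + 1)) (Fin (N + 1)) ℝ :=
  fun j k => if (j.val = 0 ∧ k.val = 0) ∨ (j.val = n ∧ k.val = n) then 1 else 0

noncomputable def Xmat (E ε η : ℝ) (N n : ℕ) : Matrix (Fin (N + 1)) (Fin (N + 1)) ℝ :=
  fun j k =>
    if j.val = 0 ∧ k.val = 0 then (E - ε) / 2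
    else if j.val = n ∧ k.val = n then -(E - ε) / 2
    else if (j.val = 0 ∧ k.val = n) ∨ (j.val = n ∧ k.val = 0) then η
    else 0

noncomputable def Ymat (E ε η : ℝ) (N n : ℕ) : Matrix (Fin (N + 1)) (Fin (N + 1)) ℂ :=
  (fun j k => ((ε • (1 : Matrix (Fin (N + 1)) (Fin (N + 1)) ℝ) +
      ((E - ε) / 2) • Jmat N n + Xmat E ε η N n) j k : ℂ))

/-!
Write `Y_n = ε • 1 + ((E - ε) / 2) • J_n + X_n`. On the plane spanned by `e₀, eₙ` the matrix
`X_n` is `((E - ε) / 2) σ_z + η σ_x`, so `X_n² = d² J_n` with `d = √((E - ε)² / 4 + η²)`, and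
`y = X_n / d` satisfies `y³ = y`, `y² = J_n`. For such a `y`, splitting the exponential series into
even and odd powers gives `exp (c y) = 1 + (cosh c - 1) y² + sinh c · y`; with `c = i t d` the
hyperbolic functions become `cos (t d)` and `i sin (t d)`, which are the entries of `V_n(t)`.
-/

open NormedSpace
open scoped Nat

theorem pow_odd_of_pow_three_eq_self {M : Type*} [Monoid M] {y : M} (hy : y ^ 3 = y) (k : ℕ) :
    y ^ (2 * k + 1) = y := by
  induction k with
  | zero => simp
  | succ k ih =>
    rw [show 2 * (k + 1) + 1 = 2 * k + 1 + 2 by ring, pow_add, ih]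
    exact (pow_succ' y 2).symm.trans hy

section BanachAlgebra

variable {𝔸 : Type*} [NormedRing 𝔸] [NormedAlgebra ℂ 𝔸] [CompleteSpace 𝔸]

theorem exp_smul_of_pow_three_eq_self {y : 𝔸} (hy : y ^ 3 = y) (c : ℂ) :
    exp (c • y) = 1 + (Complex.cosh c - 1) • y ^ 2 + Complex.sinh c • y := by
  have hodd := pow_odd_of_pow_three_eq_self hy
  have hsumEven : HasSum (fun k => ((2 * k)! ⁻¹ : ℂ) • (c • y) ^ (2 * k))
      ((1 - y ^ 2) + Complex.cosh c • y ^ 2) := by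
    refine ((hasSum_ite_eq 0 (1 - y ^ 2)).add
      ((Complex.hasSum_cosh c).smul_const (y ^ 2))).congr_fun ?_
    rintro (_ | k)
    · simp only [mul_zero, pow_zero, Nat.factorial_zero, Nat.cast_one, inv_one, one_smul,
        if_pos, div_one]
      abel
    · rw [smul_pow, smul_smul, if_neg k.succ_ne_zero, zero_add, div_eq_inv_mul,
        show 2 * (k + 1) = 2 * k + 1 + 1 by ring, pow_succ y, hodd, ← sq]
  have hsumOdd : HasSum (fun k => ((2 * k + 1)! ⁻¹ : ℂ) • (c • y) ^ (2 * k + 1))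
      (Complex.sinh c • y) := by
    refine ((Complex.hasSum_sinh c).smul_const y).congr_fun fun k => ?_
    rw [smul_pow, smul_smul, hodd, div_eq_inv_mul]
  refine (exp_series_hasSum_exp' (𝕂 := ℂ) (c • y)).unique ?_
  convert HasSum.even_add_odd (f := fun n => ((n ! : ℂ)⁻¹) • (c • y) ^ n) hsumEven hsumOdd
    using 1
  rw [sub_smul, one_smul]
  abel

theorem exp_smul_one_add_smul_sq_add_smul_of_pow_three_eq_self {y : 𝔸} (hy : y ^ 3 = y)
    (b a c : ℂ) :
    exp (b • 1 + a • y ^ 2 + c • y) = Complex.exp b •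
      (1 + (Complex.exp a * Complex.cosh c - 1) • y ^ 2 + (Complex.exp a * Complex.sinh c) • y) := by
  let +nondep : NormedAlgebra ℚ 𝔸 := .restrictScalars ℚ ℂ 𝔸
  have hy4 : y ^ 2 * y ^ 2 = y ^ 2 := by
    rw [← pow_add, show 2 + 2 = 3 + 1 by rfl, pow_succ, hy, sq]
  have hy3 : y ^ 2 * y = y := by rw [← pow_succ, hy]
  have hexpSq : exp (a • y ^ 2) = 1 + (Complex.exp a - 1) • y ^ 2 := by
    rw [exp_smul_of_pow_three_eq_self (by rw [← pow_mul, pow_mul', hy]) a, sq (y ^ 2), hy4,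
      ← Complex.cosh_add_sinh]
    module
  have hcomm : Commute (b • (1 : 𝔸)) (a • y ^ 2 + c • y) := (Commute.one_left _).smul_left b
  have hcomm' : Commute (a • y ^ 2) (c • y) :=
    ((Commute.refl y).pow_left 2).smul_left a |>.smul_right c
  rw [add_assoc, exp_add_of_commute hcomm, exp_add_of_commute hcomm', hexpSq,
    exp_smul_of_pow_three_eq_self hy, ← Algebra.algebraMap_eq_smul_one, ← algebraMap_exp_comm,
    ← Algebra.smul_def, ← Complex.exp_eq_exp_ℂ]
  congr 1
  simp only [add_mul, mul_add, one_mul, mul_one, smul_mul_smul_comm, hy4, hy3]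
  module

end BanachAlgebra

open scoped Matrix.Norms.Operator in
theorem Matrix.exp_smul_one_add_smul_sq_add_smul_of_pow_three_eq_self {ι : Type*} [Fintype ι]
    [DecidableEq ι] {y : Matrix ι ι ℂ} (hy : y ^ 3 = y) (b a c : ℂ) :
    exp (b • 1 + a • y ^ 2 + c • y) = Complex.exp b •
      (1 + (Complex.exp a * Complex.cosh c - 1) • y ^ 2 + (Complex.exp a * Complex.sinh c) • y) :=
  _root_.exp_smul_one_add_smul_sq_add_smul_of_pow_three_eq_self hy b a c

namespace Matrix

variable {ι R : Type*} [DecidableEq ι] [CommRing R]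

def pairProj (i j : ι) : Matrix ι ι R := single i i 1 + single j j 1

/-- `a σ_z + b σ_x` acting on the coordinates `i, j`. -/
def pairPauli (i j : ι) (a b : R) : Matrix ι ι R :=
  a • (single i i 1 - single j j 1) + b • (single i j 1 + single j i 1)

variable [Fintype ι] {i j : ι}

theorem single_mul_single_eq_zero_of_ne (h : i ≠ j) (k l : ι) (c d : R) :
    single k i c * single j l d = 0 :=
  single_mul_single_of_ne c k i j h d

theorem pairPauli_sq (hij : i ≠ j) (a b : R) :
    pairPauli i j a b ^ 2 = (a ^ 2 + b ^ 2) • pairProj i j := by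
  simp only [pairPauli, pairProj, sq, mul_add, add_mul, mul_sub, sub_mul, smul_mul_smul_comm,
    single_mul_single_same, single_mul_single_eq_zero_of_ne hij,
    single_mul_single_eq_zero_of_ne hij.symm, mul_one]
  module

theorem pairProj_mul_pairPauli (hij : i ≠ j) (a b : R) :
    pairProj i j * pairPauli i j a b = pairPauli i j a b := by
  simp only [pairPauli, pairProj, mul_add, add_mul, mul_sub, mul_smul_comm,
    single_mul_single_same, single_mul_single_eq_zero_of_ne hij,
    single_mul_single_eq_zero_of_ne hij.symm, mul_one]
  module

theorem inv_smul_pairPauli_sq {K : Type*} [Field K] (hij : i ≠ j) {a b d : K} (hd : d ≠ 0)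
    (hd2 : d ^ 2 = a ^ 2 + b ^ 2) : (d⁻¹ • pairPauli i j a b) ^ 2 = pairProj i j := by
  rw [smul_pow, pairPauli_sq hij, ← hd2, smul_smul, inv_pow, inv_mul_cancel₀ (pow_ne_zero 2 hd),
    one_smul]

theorem inv_smul_pairPauli_pow_three {K : Type*} [Field K] (hij : i ≠ j) {a b d : K}
    (hd : d ≠ 0) (hd2 : d ^ 2 = a ^ 2 + b ^ 2) :
    (d⁻¹ • pairPauli i j a b) ^ 3 = d⁻¹ • pairPauli i j a b := by
  rw [pow_succ, inv_smul_pairPauli_sq hij hd hd2, mul_smul_comm, pairProj_mul_pairPauli hij]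

end Matrix

open Matrix

theorem Ymat_eq (E ε η : ℝ) {N : ℕ} {m : Fin (N + 1)} (hm : m ≠ 0) :
    Ymat E ε η N m = (ε : ℂ) • 1 + ((E - ε) / 2 : ℂ) • pairProj 0 m +
      pairPauli 0 m ((E - ε) / 2 : ℂ) η := by
  ext j k
  simp only [Ymat, Jmat, Xmat, pairProj, pairPauli, Matrix.add_apply, Matrix.smul_apply,
    Matrix.sub_apply, single_apply, one_apply, Fin.val_eq_zero_iff, ← Fin.ext_iff, smul_eq_mul]
  obtain rfl | rfl | ⟨hj0, hjm⟩ : j = 0 ∨ m = j ∨ j ≠ 0 ∧ j ≠ m := by tauto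
  all_goals obtain rfl | rfl | ⟨hk0, hkm⟩ : k = 0 ∨ m = k ∨ k ≠ 0 ∧ k ≠ m := by tauto
  all_goals simp [*, Ne.symm, apply_ite ((↑) : ℝ → ℂ)]
  all_goals ring

theorem Vmat_eq (E ε η : ℝ) {N : ℕ} {m : Fin (N + 1)} (hm : m ≠ 0) (t : ℝ) {d : ℝ}
    (hd : √((E - ε) ^ 2 / 4 + η ^ 2) = d) :
    Vmat E ε η N m t = 1 + (gf E ε η t * Real.cos (t * d) - 1) • pairProj 0 m +
      (gf E ε η t * Complex.I * Real.sin (t * d) / d) • pairPauli 0 m ((E - ε) / 2 : ℂ) η := by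
  have hsqrt : √((E - ε) ^ 2 + 4 * η ^ 2) = 2 * d := by
    rw [← hd, ← Real.sqrt_sq zero_le_two, ← Real.sqrt_mul (by norm_num)]
    ring_nf
  ext j k
  simp only [Vmat, zf, wf, hd, hsqrt, pairProj, pairPauli, Matrix.add_apply, Matrix.smul_apply,
    Matrix.sub_apply, single_apply, one_apply, Fin.val_eq_zero_iff, ← Fin.ext_iff, smul_eq_mul,
    neg_mul, Real.sin_neg, Real.cos_neg]
  obtain rfl | rfl | ⟨hj0, hjm⟩ : j = 0 ∨ m = j ∨ j ≠ 0 ∧ j ≠ m := by tauto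
  all_goals obtain rfl | rfl | ⟨hk0, hkm⟩ : k = 0 ∨ m = k ∨ k ≠ 0 ∧ k ≠ m := by tauto
  all_goals simp [*, Ne.symm]
  all_goals ring

theorem stmt4_general (E ε η : ℝ) (hη : 0 < η) (N n : ℕ)
    (hn1 : 1 ≤ n) (hnN : n ≤ N) (t : ℝ) :
    NormedSpace.exp ((Complex.I * t) • Ymat E ε η N n) =
      Complex.exp (Complex.I * t * ε) • Vmat E ε η N n t := by
  obtain ⟨m, rfl⟩ : ∃ m : Fin (N + 1), (m : ℕ) = n := ⟨⟨n, by omega⟩, rfl⟩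
  have hm : m ≠ 0 := by rintro rfl; simp at hn1
  obtain ⟨d, hd_def⟩ : ∃ d, √((E - ε) ^ 2 / 4 + η ^ 2) = d := ⟨_, rfl⟩
  have hd : (d : ℂ) ≠ 0 := by rw [← hd_def]; norm_cast; positivity
  have hd2 : (d : ℂ) ^ 2 = ((E - ε) / 2 : ℂ) ^ 2 + η ^ 2 := by
    rw [← Complex.ofReal_pow, ← hd_def, Real.sq_sqrt (by positivity)]; push_cast; ring
  obtain ⟨y, hy⟩ : ∃ y, (d⁻¹ : ℂ) • pairPauli 0 m ((E - ε) / 2 : ℂ) η = y := ⟨_, rfl⟩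
  have hy2 : y ^ 2 = pairProj 0 m := hy ▸ inv_smul_pairPauli_sq hm.symm hd hd2
  have hy3 : y ^ 3 = y := hy ▸ inv_smul_pairPauli_pow_three hm.symm hd hd2
  have hX : pairPauli 0 m ((E - ε) / 2 : ℂ) η = (d : ℂ) • y := by rw [← hy, smul_inv_smul₀ hd]
  have hY : (Complex.I * t) • Ymat E ε η N m = (Complex.I * t * ε) • 1 +
      (Complex.I * t * ((E - ε) / 2)) • y ^ 2 + (Complex.I * t * d) • y := by
    rw [Ymat_eq E ε η hm, hX, ← hy2]
    module
  have hV : Vmat E ε η N m t = 1 + (gf E ε η t * Real.cos (t * d) - 1) • y ^ 2 +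
      (gf E ε η t * (Real.sin (t * d) * Complex.I)) • y := by
    rw [Vmat_eq E ε η hm t hd_def, hX, ← hy2, smul_smul, div_mul_cancel₀ _ hd, mul_assoc,
      mul_comm Complex.I]
  have hg : gf E ε η t = Complex.exp (Complex.I * t * ((E - ε) / 2)) := by
    rw [gf, mul_div_assoc]
  have htd : Complex.I * t * d = (t * d : ℝ) * Complex.I := by push_cast; ring
  rw [hY, hV, Matrix.exp_smul_one_add_smul_sq_add_smul_of_pow_three_eq_self hy3, hg, htd,
    Complex.cosh_mul_I, Complex.sinh_mul_I, Complex.ofReal_cos, Complex.ofReal_sin]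

theorem stmt4 (E ε η : ℝ) (hη : 0 < η) (N n : ℕ) (hN : 1 ≤ N)
    (hn1 : 1 ≤ n) (hnN : n ≤ N) (t : ℝ) :
    NormedSpace.exp ((Complex.I * t) • Ymat E ε η N n) =
      Complex.exp (Complex.I * t * ε) • Vmat E ε η N n t :=
  stmt4_general E ε η hη N n hn1 hnN t
end

section
/- For every integer N ≥ 1 and every real τ, write g := g(τ), w := w(τ), z := z(τ), V_n := V_n(τ), and let P := V_1·V_2·⋯·V_N be the ordered matrix product. Then: P_{00} = (gz)^N; P_{0j} = (gz)^{j−1}·gw for 1 ≤ j ≤ N; P_{k0} = gw·(gz)^{N−k} for 1 ≤ k ≤ N; P_{kj} = 0 for 1 ≤ j < k ≤ N; P_{kk} = g·conj(z) for 1 ≤ k ≤ N; and P_{kj} = (gw)²·(gz)^{j−k−1} for 1 ≤ k < j ≤ N. -/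
/-!
Each `V_n` acts on the basis vectors `0` and `n` by the `2 × 2` block `[[gz, gw], [gw, g z̄]]`
and fixes all others, so right multiplication by `V_n` only recombines columns `0` and `n`.
Multiplying `V_1 ⋯ V_m` by `V_{m+1}` therefore touches only column `0` and the still untouched
identity column `m + 1`, and an induction on `m` gives a closed form for every entry of the
partial products.
-/

section CouplingMatrix

variable {R : Type*} [CommRing R] {N : ℕ}

def couplingMatrix (a b d : R) (n : ℕ) : Matrix (Fin (N + 1)) (Fin (N + 1)) R :=
  fun j k =>
    if j.val = 0 then (if k.val = 0 then a else if k.val = n then b else 0)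
    else if j.val = n then (if k.val = 0 then b else if k.val = n then d else 0)
    else if j = k then 1 else 0

theorem mul_couplingMatrix_apply (P : Matrix (Fin (N + 1)) (Fin (N + 1)) R) (a b d : R)
    {n : ℕ} (hn : n ≠ 0) (hnN : n ≤ N) (r c : Fin (N + 1)) :
    (P * couplingMatrix (N := N) a b d n) r c =
      if c.val = 0 then P r 0 * a + P r ⟨n, by omega⟩ * b
      else if c.val = n then P r 0 * b + P r ⟨n, by omega⟩ * d
      else P r c := by
  have h0n : (0 : Fin (N + 1)) ≠ ⟨n, by omega⟩ := by simp [Fin.ext_iff, Ne.symm hn]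
  rw [Matrix.mul_apply]
  split_ifs with hc0 hcn
  · obtain rfl : c = 0 := Fin.ext hc0
    rw [Fintype.sum_eq_add 0 _ h0n]
    · simp [couplingMatrix, hn]
    · rintro j ⟨hj0, hjn⟩
      simp [couplingMatrix, hj0, Fin.ext_iff.not.mp hjn]
  · subst hcn
    rw [Fintype.sum_eq_add 0 _ h0n]
    · simp [couplingMatrix, hn]
    · rintro j ⟨hj0, hjn⟩
      simp_all [couplingMatrix, Fin.val_inj]
  · rw [Fintype.sum_eq_single c]
    · simp [couplingMatrix, hc0, hcn]
    · intro j hjc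
      simp_all [couplingMatrix]

def couplingProd (a b d : R) (m : ℕ) : Matrix (Fin (N + 1)) (Fin (N + 1)) R :=
  fun r c =>
    if r.val = 0 then
      if c.val = 0 then a ^ m else if c.val ≤ m then a ^ (c.val - 1) * b else 0
    else if r.val ≤ m then
      if c.val = 0 then b * a ^ (m - r.val)
      else if c.val < r.val then 0
      else if c = r then d
      else if c.val ≤ m then b ^ 2 * a ^ (c.val - r.val - 1)
      else 0
    else if r = c then 1 else 0

theorem couplingProd_zero (a b d : R) : couplingProd (N := N) a b d 0 = 1 := by
  ext r c
  simp only [couplingProd, Matrix.one_apply, pow_zero, ← Fin.val_inj]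
  split_ifs <;> first | rfl | omega

theorem couplingProd_apply_col_zero (a b d : R) (m : ℕ) (r : Fin (N + 1)) :
    couplingProd a b d m r 0 =
      if r.val = 0 then a ^ m else if r.val ≤ m then b * a ^ (m - r.val) else 0 := by
  simp only [couplingProd, Fin.val_zero]
  split_ifs <;> simp_all

theorem couplingProd_apply_col_succ (a b d : R) {m : ℕ} (r : Fin (N + 1)) {c : Fin (N + 1)}
    (hc : c.val = m + 1) : couplingProd a b d m r c = if r = c then 1 else 0 := by
  simp only [couplingProd, ← Fin.val_inj]
  split_ifs <;> first | rfl | omega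

theorem couplingProd_succ_apply_col_succ (a b d : R) (m : ℕ) (r : Fin (N + 1))
    {c : Fin (N + 1)} (hc : c.val = m + 1) :
    couplingProd a b d (m + 1) r c =
      if r.val = 0 then a ^ m * b else if r.val ≤ m then b ^ 2 * a ^ (m - r.val)
      else if r.val = m + 1 then d else 0 := by
  simp only [couplingProd, ← Fin.val_inj]
  split_ifs <;> first | rfl | omega | (congr 2; omega)

theorem couplingProd_succ_apply_of_ne (a b d : R) (m : ℕ) (r c : Fin (N + 1))
    (hc0 : c.val ≠ 0) (hc : c.val ≠ m + 1) :
    couplingProd a b d (m + 1) r c = couplingProd a b d m r c := by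
  simp only [couplingProd, ← Fin.val_inj]
  split_ifs <;> first | rfl | omega

theorem couplingProd_mul_couplingMatrix (a b d : R) {m : ℕ} (hm : m + 1 ≤ N) :
    couplingProd a b d m * couplingMatrix a b d (m + 1) = couplingProd (N := N) a b d (m + 1) := by
  ext r c
  rw [mul_couplingMatrix_apply _ _ _ _ (by omega) hm, couplingProd_apply_col_zero,
    couplingProd_apply_col_succ _ _ _ _ rfl]
  by_cases hc0 : c.val = 0
  · rw [if_pos hc0, show c = 0 from Fin.ext hc0, couplingProd_apply_col_zero]
    simp only [← Fin.val_inj]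
    split_ifs <;> first
      | (exfalso; omega)
      | ring1
      | (rw [show m + 1 - r.val = m - r.val + 1 by omega]; ring1)
      | (rw [show m + 1 - r.val = 0 by omega]; ring1)
  by_cases hcm : c.val = m + 1
  · rw [if_neg hc0, if_pos hcm, couplingProd_succ_apply_col_succ _ _ _ _ _ hcm]
    simp only [← Fin.val_inj]
    split_ifs <;> first | (exfalso; omega) | ring1
  · rw [if_neg hc0, if_neg hcm, couplingProd_succ_apply_of_ne _ _ _ _ _ _ hc0 hcm]

theorem prod_couplingMatrix (a b d : R) {m : ℕ} (hm : m ≤ N) :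
    ((List.range m).map fun i => couplingMatrix (N := N) a b d (i + 1)).prod =
      couplingProd a b d m := by
  induction m with
  | zero => rw [List.range_zero, List.map_nil, List.prod_nil, couplingProd_zero]
  | succ m ih =>
    rw [List.range_succ, List.map_append, List.prod_append, ih (by omega), List.map_singleton,
      List.prod_singleton, couplingProd_mul_couplingMatrix a b d hm]

end CouplingMatrix

theorem zf_neg (E ε η t : ℝ) : zf E ε η (-t) = starRingEnd ℂ (zf E ε η t) := by
  simp only [zf, map_add, map_mul, map_div₀, Complex.conj_I, Complex.conj_ofReal, map_sub,
    neg_mul, Real.cos_neg, Real.sin_neg, Complex.ofReal_neg]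
  push_cast
  ring

theorem Vmat_eq_couplingMatrix (E ε η : ℝ) (N : ℕ) {n : ℕ} (hn : n ≠ 0) (t : ℝ) :
    Vmat E ε η N n t =
      couplingMatrix (gf E ε η t * zf E ε η t) (gf E ε η t * wf E ε η t)
        (gf E ε η t * zf E ε η (-t)) n := by
  ext j k
  simp only [Vmat, couplingMatrix]
  split_ifs <;> simp_all

theorem stmt5_general (E ε η : ℝ) (N : ℕ) (τ : ℝ) :
    ∀ g w z : ℂ, g = gf E ε η τ → w = wf E ε η τ → z = zf E ε η τ →
    ∀ P : Matrix (Fin (N + 1)) (Fin (N + 1)) ℂ,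
      P = ((List.range N).map (fun i => Vmat E ε η N (i + 1) τ)).prod →
    (P 0 0 = (g * z) ^ N) ∧
    (∀ j : Fin (N + 1), 1 ≤ j.val → P 0 j = (g * z) ^ (j.val - 1) * (g * w)) ∧
    (∀ k : Fin (N + 1), 1 ≤ k.val → P k 0 = (g * w) * (g * z) ^ (N - k.val)) ∧
    (∀ k j : Fin (N + 1), 1 ≤ j.val → j.val < k.val → P k j = 0) ∧
    (∀ k : Fin (N + 1), 1 ≤ k.val → P k k = g * (starRingEnd ℂ) z) ∧
    (∀ k j : Fin (N + 1), 1 ≤ k.val → k.val < j.val →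
      P k j = (g * w) ^ 2 * (g * z) ^ (j.val - k.val - 1)) := by
  rintro g w z rfl rfl rfl P rfl
  simp only [Vmat_eq_couplingMatrix E ε η N (Nat.succ_ne_zero _), prod_couplingMatrix _ _ _ le_rfl,
    ← zf_neg]
  refine ⟨?_, fun j hj => ?_, fun k hk => ?_, fun k j hj hjk => ?_, fun k hk => ?_,
    fun k j hk hkj => ?_⟩ <;>
  simp only [couplingProd, Fin.val_zero] <;> split_ifs <;> first | rfl | omega

theorem stmt5 (E ε η : ℝ) (hη : 0 < η) (N : ℕ) (hN : 1 ≤ N) (τ : ℝ) :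
    ∀ g w z : ℂ, g = gf E ε η τ → w = wf E ε η τ → z = zf E ε η τ →
    ∀ P : Matrix (Fin (N + 1)) (Fin (N + 1)) ℂ,
      P = ((List.range N).map (fun i => Vmat E ε η N (i + 1) τ)).prod →
    (P 0 0 = (g * z) ^ N) ∧
    (∀ j : Fin (N + 1), 1 ≤ j.val → P 0 j = (g * z) ^ (j.val - 1) * (g * w)) ∧
    (∀ k : Fin (N + 1), 1 ≤ k.val → P k 0 = (g * w) * (g * z) ^ (N - k.val)) ∧
    (∀ k j : Fin (N + 1), 1 ≤ j.val → j.val < k.val → P k j = 0) ∧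
    (∀ k : Fin (N + 1), 1 ≤ k.val → P k k = g * (starRingEnd ℂ) z) ∧
    (∀ k j : Fin (N + 1), 1 ≤ k.val → k.val < j.val →
      P k j = (g * w) ^ 2 * (g * z) ^ (j.val - k.val - 1)) :=
  stmt5_general E ε η N τ
end

section
/- Let (τ_k) be a sequence of positive reals and (N_k) a sequence of natural numbers such that τ_k → 0 and τ_k²·N_k → ∞ as k → ∞. Then |z(τ_k)|^{2N_k} → 0 as k → ∞. -/
open Filter Topology Real

theorem tendsto_pow_of_eventually_le_one_sub_mul_sq {ι : Type*} {l : Filter ι}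
    {f : ℝ → ℝ} {C : ℝ} (hC : 0 < C) (hf₀ : ∀ t, 0 ≤ f t)
    (hf : ∀ᶠ t in 𝓝 0, f t ≤ 1 - C * t ^ 2) {τ : ι → ℝ} {N : ι → ℕ}
    (hτ : Tendsto τ l (𝓝 0)) (hτN : Tendsto (fun k => τ k ^ 2 * N k) l atTop) :
    Tendsto (fun k => f (τ k) ^ N k) l (𝓝 0) := by
  have hexp : Tendsto (fun k => exp (-(C * (τ k ^ 2 * N k)))) l (𝓝 0) :=
    tendsto_exp_atBot.comp (tendsto_neg_atTop_atBot.comp (hτN.const_mul_atTop hC))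
  refine squeeze_zero' (.of_forall fun k => pow_nonneg (hf₀ _) _) ?_ hexp
  filter_upwards [hτ.eventually hf] with k hk
  calc f (τ k) ^ N k ≤ exp (-(C * τ k ^ 2)) ^ N k :=
        pow_le_pow_left₀ (hf₀ _) (hk.trans (one_sub_le_exp_neg _)) _
    _ = exp (-(C * (τ k ^ 2 * N k))) := by rw [← exp_nat_mul]; ring_nf

theorem Real.mul_sq_le_sin_sq {x : ℝ} (hx : |x| ≤ π / 2) : (2 / π) ^ 2 * x ^ 2 ≤ sin x ^ 2 := by
  rw [← mul_pow]
  have hπ : (0 : ℝ) < 2 / π := by positivity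
  exact sq_le_sq.2 (by simpa [abs_mul, abs_of_pos hπ] using mul_abs_le_abs_sin hx)

theorem norm_zf_sq (E ε η t : ℝ) :
    ‖zf E ε η t‖ ^ 2 =
      1 - 4 * η ^ 2 / ((E - ε) ^ 2 + 4 * η ^ 2) *
        sin (t * √((E - ε) ^ 2 / 4 + η ^ 2)) ^ 2 := by
  set D := (E - ε) ^ 2 + 4 * η ^ 2
  set x := t * √((E - ε) ^ 2 / 4 + η ^ 2)
  have hz : zf E ε η t = (cos x : ℂ) + ((E - ε) / √D * sin x : ℝ) * Complex.I := by
    simp only [zf, Complex.ofReal_mul, Complex.ofReal_div, Complex.ofReal_sub]; ring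
  rw [hz, Complex.norm_add_mul_I, sq_sqrt (by positivity), div_mul_eq_mul_div, div_pow, mul_pow,
    sq_sqrt (by positivity), ← sin_sq_add_cos_sq x]
  rcases eq_or_ne D 0 with hD | hD
  · -- `D = 0` forces `E = ε` and `η = 0`, hence `x = 0`
    have hEε : E - ε = 0 := by nlinarith [sq_nonneg (E - ε), sq_nonneg η]
    have hη : η = 0 := by nlinarith [sq_nonneg (E - ε), sq_nonneg η]
    simp [x, hEε, hη]
  · field_simp
    ring

theorem stmt17_general (E ε η : ℝ) (hη : 0 < η) (τ : ℕ → ℝ) (N : ℕ → ℕ)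
    (hτ0 : Filter.Tendsto τ Filter.atTop (nhds 0))
    (hτ2N : Filter.Tendsto (fun k => τ k ^ 2 * N k) Filter.atTop Filter.atTop) :
    Filter.Tendsto (fun k => ‖zf E ε η (τ k)‖ ^ (2 * N k))
      Filter.atTop (nhds 0) := by
  set θ := √((E - ε) ^ 2 / 4 + η ^ 2)
  set c := 4 * η ^ 2 / ((E - ε) ^ 2 + 4 * η ^ 2)
  have hc : 0 < c := by positivity
  have hθ : 0 < θ := by positivity
  have hsmall : ∀ᶠ t in 𝓝 (0 : ℝ), |t * θ| < π / 2 :=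
    ((continuous_abs.comp (continuous_mul_const θ)).tendsto' 0 0 (by simp)).eventually_lt_const
      pi_div_two_pos
  have hbound : ∀ᶠ t in 𝓝 (0 : ℝ), ‖zf E ε η t‖ ^ 2 ≤ 1 - c * (2 / π) ^ 2 * θ ^ 2 * t ^ 2 := by
    filter_upwards [hsmall] with t ht
    rw [norm_zf_sq]
    calc 1 - c * sin (t * θ) ^ 2 ≤ 1 - c * ((2 / π) ^ 2 * (t * θ) ^ 2) := by
          gcongr; exact mul_sq_le_sin_sq ht.le
      _ = _ := by ring
  simpa only [pow_mul] using tendsto_pow_of_eventually_le_one_sub_mul_sq (by positivity)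
    (fun t => by positivity) hbound hτ0 hτ2N

theorem stmt17 (E ε η : ℝ) (hη : 0 < η) (τ : ℕ → ℝ) (N : ℕ → ℕ)
    (hτpos : ∀ k, 0 < τ k)
    (hτ0 : Filter.Tendsto τ Filter.atTop (nhds 0))
    (hτ2N : Filter.Tendsto (fun k => τ k ^ 2 * N k) Filter.atTop Filter.atTop) :
    Filter.Tendsto (fun k => ‖zf E ε η (τ k)‖ ^ (2 * N k))
      Filter.atTop (nhds 0) :=
  stmt17_general E ε η hη τ N hτ0 hτ2N
end

section
/- Let n ≥ 1 be an integer, ξ ∈ ℂⁿ a vector, and β, δ real numbers. Let L be the n×n complex matrix with entries L_{jk} = β·δ_{jk} + δ·ξ_j·conj(ξ_k). Then det(I − exp(−L)) = (1 − e^{−β})^{n−1}·(1 − e^{−(β + δ·‖ξ‖²)}), where ‖ξ‖² = Σ_j |ξ_j|² and exp denotes the matrix exponential. -/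
/-!
The rank-one matrix `P = ξ ξᴴ` satisfies `P² = ‖ξ‖² P`, so the exponential series of a multiple
of `P` collapses to `1 + c P` for an explicit scalar `c`, and `β I` commutes with `P`. Hence
`I - exp (-L) = (1 - e^{-β}) I + (rank one)`, whose determinant is given by the matrix
determinant lemma; the scalar identity `e^a = 1 + a · (e^a - 1)/a` then assembles the result.
-/

open NormedSpace

/-- The entire function `(exp a - 1) / a`, defined by its power series so that no case split at
`a = 0` is needed. -/
noncomputable def expSubOneDiv {𝕂 : Type*} [RCLike 𝕂] (a : 𝕂) : 𝕂 :=
  ∑' k : ℕ, ((k + 1).factorial : 𝕂)⁻¹ * a ^ k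

section ExpSubOneDiv

variable {𝕂 : Type*} [RCLike 𝕂]

theorem summable_expSubOneDiv (a : 𝕂) :
    Summable fun k : ℕ => ((k + 1).factorial : 𝕂)⁻¹ * a ^ k := by
  refine .of_norm_bounded (Real.summable_pow_div_factorial ‖a‖) fun k => ?_
  rw [norm_mul, norm_pow, norm_inv, RCLike.norm_natCast, div_eq_inv_mul]
  gcongr
  exact k.le_succ

theorem exp_eq_one_add_mul_expSubOneDiv (a : 𝕂) : exp a = 1 + a * expSubOneDiv a := by
  rw [exp_eq_tsum 𝕂]
  dsimp only
  rw [(expSeries_summable' (𝕂 := 𝕂) a).tsum_eq_zero_add, expSubOneDiv, ← tsum_mul_left]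
  simp [pow_succ', Nat.factorial_succ, mul_left_comm]

end ExpSubOneDiv

section RankOne

variable {𝕂 𝔸 : Type*} [RCLike 𝕂] [NormedRing 𝔸] [NormedAlgebra 𝕂 𝔸] [CompleteSpace 𝔸]

theorem exp_eq_one_add_smul_of_mul_self_eq_smul {A : 𝔸} {a : 𝕂} (hA : A * A = a • A) :
    exp A = 1 + expSubOneDiv a • A := by
  have hpow : ∀ k : ℕ, A ^ (k + 1) = a ^ k • A := by
    intro k
    induction k with
    | zero => simp
    | succ k ih => rw [pow_succ, ih, smul_mul_assoc, hA, smul_smul, ← pow_succ]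
  rw [exp_eq_tsum 𝕂]
  dsimp only
  rw [(expSeries_summable' (𝕂 := 𝕂) A).tsum_eq_zero_add]
  simp only [hpow, pow_zero, Nat.factorial_zero, Nat.cast_one, inv_one, one_smul, smul_smul]
  rw [(summable_expSubOneDiv a).tsum_smul_const]
  rfl

theorem exp_smul_one_add_smul_of_mul_self_eq_smul [NormedAlgebra ℚ 𝔸] {A : 𝔸} {s : 𝕂}
    (hA : A * A = s • A) (c d : 𝕂) :
    exp (c • 1 + d • A) = exp c • (1 + (d * expSubOneDiv (d * s)) • A) := by
  have hc : exp (c • (1 : 𝔸)) = exp c • 1 := by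
    rw [exp_eq_one_add_smul_of_mul_self_eq_smul (a := c) (by rw [smul_one_mul]),
      exp_eq_one_add_mul_expSubOneDiv, smul_smul, add_smul, one_smul, mul_comm]
  have hd : exp (d • A) = 1 + (d * expSubOneDiv (d * s)) • A := by
    rw [exp_eq_one_add_smul_of_mul_self_eq_smul (a := d * s), smul_smul, mul_comm]
    rw [smul_mul_smul_comm, hA, smul_smul, smul_smul, mul_right_comm]
  rw [exp_add_of_commute ((Commute.one_left A).smul_left c |>.smul_right d), hc, hd,
    smul_one_mul]

end RankOne

namespace Matrix

variable {m : Type*} [Fintype m] [DecidableEq m]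

theorem exp_smul_one_add_smul_of_mul_self_eq_smul {𝕂 : Type*} [RCLike 𝕂] {A : Matrix m m 𝕂}
    {s : 𝕂} (hA : A * A = s • A) (c d : 𝕂) :
    exp (c • 1 + d • A) = exp c • (1 + (d * expSubOneDiv (d * s)) • A) := by
  open scoped Norms.Operator in
  exact _root_.exp_smul_one_add_smul_of_mul_self_eq_smul hA c d

theorem det_smul_one_add_vecMulVec {K : Type*} [Field K] [Nonempty m] (a : K) (u v : m → K) :
    (a • 1 + vecMulVec u v).det = a ^ (Fintype.card m - 1) * (a + v ⬝ᵥ u) := by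
  rcases eq_or_ne a 0 with rfl | ha
  · rcases subsingleton_or_nontrivial m with hm | hm
    · have : Unique m := uniqueOfSubsingleton (Classical.arbitrary m)
      simp [det_unique, vecMulVec_apply, dotProduct, mul_comm]
    · have : 1 < Fintype.card m := Fintype.one_lt_card_iff_nontrivial.mpr hm
      rw [zero_smul, zero_add, det_vecMulVec, zero_pow (by omega), zero_mul]
  · obtain ⟨k, hk⟩ := Nat.exists_eq_succ_of_ne_zero (Fintype.card_ne_zero (α := m))
    rw [← smul_inv_smul₀ ha (vecMulVec u v), ← smul_vecMulVec, ← smul_add, det_smul,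
      vecMulVec_eq Unit, det_one_add_replicateCol_mul_replicateRow, dotProduct_smul, hk,
      Nat.succ_sub_one, pow_succ, smul_eq_mul]
    field_simp

end Matrix

open Matrix

theorem stmt18 (n : ℕ) (hn : 1 ≤ n) (ξ : Fin n → ℂ) (β δ : ℝ) :
    ∀ L : Matrix (Fin n) (Fin n) ℂ,
      (∀ j k, L j k = (β : ℂ) * (if j = k then 1 else 0) +
        (δ : ℂ) * ξ j * (starRingEnd ℂ) (ξ k)) →
    (1 - NormedSpace.exp (-L)).det =
      (1 - Complex.exp (-(β : ℂ))) ^ (n - 1) *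
        (1 - Complex.exp (-((β : ℂ) + (δ : ℂ) *
          ((∑ j, Complex.normSq (ξ j) : ℝ) : ℂ)))) := by
  intro L hL
  have : NeZero n := ⟨by omega⟩
  set M := vecMulVec ξ (star ξ)
  set s := star ξ ⬝ᵥ ξ
  have hs : ((∑ j, Complex.normSq (ξ j) : ℝ) : ℂ) = s := by
    push_cast
    simp only [s, dotProduct, Pi.star_apply, Complex.star_def, Complex.normSq_eq_conj_mul_self]
  have hM : M * M = s • M := by rw [vecMulVec_mul_vecMulVec, vecMulVec_smul]
  have hL' : -L = (-β : ℂ) • 1 + (-δ : ℂ) • M := by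
    ext j k
    simp only [hL, Matrix.neg_apply, Matrix.add_apply, Matrix.smul_apply, one_apply,
      vecMulVec_apply, M, Pi.star_apply, Complex.star_def, smul_eq_mul]
    split_ifs <;> ring
  set e := Complex.exp (-β)
  set c := (δ : ℂ) * expSubOneDiv (-δ * s)
  have hsub : 1 - exp (-L) = (1 - e) • 1 + vecMulVec ((e * c) • ξ) (star ξ) := by
    rw [hL', exp_smul_one_add_smul_of_mul_self_eq_smul hM, ← Complex.exp_eq_exp_ℂ,
      smul_vecMulVec]
    module
  have hexp : Complex.exp (-δ * s) = 1 + (-δ * s) * expSubOneDiv (-δ * s) := by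
    rw [Complex.exp_eq_exp_ℂ, exp_eq_one_add_mul_expSubOneDiv]
  rw [hsub, det_smul_one_add_vecMulVec, Fintype.card_fin, dotProduct_smul, hs, neg_add,
    Complex.exp_add, ← neg_mul, hexp, smul_eq_mul]
  ring
end
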